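/- arXiv:2009.06840 — 8 statements merged into one kernel-verified Lean document; each statement's English description precedes it below -/
import Mathlib

section
/- Let g and h be distinct transpositions in the symmetric group S_n (n ≥ 3) with disjoint supports (so gh = hg). Then the only common neighbors of g and h in the complete transposition graph CT_n (the Cayley graph on S_n with connection set all transpositions) are the identity and gh; hence there is exactly one 4-cycle in CT_n passing through the path (g, id, h). -/
/-- The complete transposition graph: the Cayley graph on the symmetric group
`Equiv.Perm (Fin n)` whose connection set is the set of all transpositions. -/
def CT (n : ℕ) : SimpleGraph (Equiv.Perm (Fin n)) where
  Adj x y := (y * x⁻¹).IsSwap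
  symm := by
    constructor
    rintro x y ⟨a, b, hab, h⟩
    refine ⟨a, b, hab, ?_⟩
    rw [← Equiv.swap_inv a b, ← h, mul_inv_rev, inv_inv]
  loopless := by
    constructor
    rintro x ⟨a, b, hab, h⟩
    rw [mul_inv_cancel] at h
    have hba : b = a := by
      simpa [Equiv.swap_apply_left] using congrArg (fun f => f a) h.symm
    exact hab hba.symm

/-!
A common neighbour `w` of `g` and `h` has the form `w = t * g = s * h` with transpositions `t, s`,
so `t * s = g * h`. The right side moves four points, so `t` and `s` are disjoint, and comparing
the cycle factors of both sides gives `t ∈ {g, h}`, i.e. `w ∈ {1, h * g}`.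
-/

open Finset

namespace Equiv.Perm

variable {α : Type*} [DecidableEq α]

theorem IsSwap.inv_eq {σ : Perm α} (hσ : σ.IsSwap) : σ⁻¹ = σ := by
  obtain ⟨a, b, -, rfl⟩ := hσ
  exact swap_inv a b

theorem IsSwap.mul_self {σ : Perm α} (hσ : σ.IsSwap) : σ * σ = 1 := by
  obtain ⟨a, b, -, rfl⟩ := hσ
  exact swap_mul_self a b

variable [Fintype α]

theorem disjoint_of_card_support_mul_eq {σ τ : Perm α}
    (h : #(σ * τ).support = #σ.support + #τ.support) : σ.Disjoint τ := by
  have hle : #(σ * τ).support ≤ #(σ.support ∪ τ.support) := card_le_card (support_mul_le σ τ)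
  rw [disjoint_iff_disjoint_support, ← card_union_eq_card_add_card]
  exact le_antisymm (card_union_le _ _) (h ▸ hle)

theorem IsSwap.eq_or_eq_of_mul_eq_mul {σ τ g h : Perm α} (hσ : σ.IsSwap) (hτ : τ.IsSwap)
    (hg : g.IsSwap) (hh : h.IsSwap) (hgh : g.Disjoint h) (e : σ * τ = g * h) :
    σ = g ∨ σ = h := by
  have hστ : σ.Disjoint τ := by
    apply disjoint_of_card_support_mul_eq
    rw [e, hgh.card_support_mul, card_support_eq_two.mpr hσ, card_support_eq_two.mpr hτ,
      card_support_eq_two.mpr hg, card_support_eq_two.mpr hh]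
  have hmem : σ ∈ (σ * τ).cycleFactorsFinset := by
    rw [hστ.cycleFactorsFinset_mul_eq_union, hσ.isCycle.cycleFactorsFinset_eq_singleton]
    exact mem_union_left _ (mem_singleton_self σ)
  rwa [e, hgh.cycleFactorsFinset_mul_eq_union, hg.isCycle.cycleFactorsFinset_eq_singleton,
    hh.isCycle.cycleFactorsFinset_eq_singleton, mem_union, mem_singleton, mem_singleton] at hmem

end Equiv.Perm

open Equiv Perm

theorem CT_commonNeighbors_of_disjoint {n : ℕ} {g h : Perm (Fin n)} (hg : g.IsSwap)
    (hh : h.IsSwap) (hgh : g.Disjoint h) :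
    {w : Perm (Fin n) | (CT n).Adj g w ∧ (CT n).Adj h w} = {1, g * h} := by
  ext w
  simp only [CT, Set.mem_ofPred_eq, Set.mem_insert_iff, Set.mem_singleton_iff, hg.inv_eq,
    hh.inv_eq]
  constructor
  · rintro ⟨ht, hs⟩
    have e : w * g * (w * h) = g * h := by
      rw [← ht.inv_eq, mul_inv_rev, hg.inv_eq]
      group
    rcases ht.eq_or_eq_of_mul_eq_mul hs hg hh hgh e with ht | ht
    · left
      simpa [mul_assoc, hg.mul_self] using congrArg (· * g) ht
    · right
      simpa [mul_assoc, hg.mul_self, hgh.commute.eq] using congrArg (· * g) ht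
  · rintro (rfl | rfl)
    · simpa using ⟨hg, hh⟩
    · constructor
      · rwa [hgh.commute.eq, mul_assoc, hg.mul_self, mul_one]
      · rwa [mul_assoc, hh.mul_self, mul_one]

theorem stmt_0_general {n : ℕ} (g h : Equiv.Perm (Fin n))
    (hg : g.IsSwap) (hh : h.IsSwap)
    (hdisj : Disjoint g.support h.support) :
    {w : Equiv.Perm (Fin n) | (CT n).Adj g w ∧ (CT n).Adj h w} = {1, g * h} ∧
    Nat.card {w : Equiv.Perm (Fin n) | w ≠ 1 ∧ (CT n).Adj g w ∧ (CT n).Adj h w} = 1 := by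
  have hgh : g.Disjoint h := disjoint_iff_disjoint_support.mpr hdisj
  have hcommon := CT_commonNeighbors_of_disjoint hg hh hgh
  have hne : g * h ≠ 1 := fun e => by
    simpa [e, card_support_eq_two.mpr hg, card_support_eq_two.mpr hh] using hgh.card_support_mul
  have hnontrivial :
      {w : Perm (Fin n) | w ≠ 1 ∧ (CT n).Adj g w ∧ (CT n).Adj h w} = {g * h} := by
    ext w
    have hw := Set.ext_iff.mp hcommon w
    simp only [Set.mem_ofPred_eq, Set.mem_insert_iff, Set.mem_singleton_iff] at hw ⊢
    rw [hw]
    constructor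
    · rintro ⟨hw1, rfl | rfl⟩
      exacts [absurd rfl hw1, rfl]
    · rintro rfl
      exact ⟨hne, Or.inr rfl⟩
  rw [hnontrivial, Nat.card_unique]
  exact ⟨hcommon, rfl⟩

/-- Common neighbors of two distinct disjoint-support transpositions `g, h` in `CT n`
are exactly `id` and `g*h`; hence exactly one common neighbor other than `id`, i.e.
exactly one 4-cycle through the path `(g, id, h)`. -/
theorem stmt_0 {n : ℕ} (hn : 3 ≤ n) (g h : Equiv.Perm (Fin n))
    (hg : g.IsSwap) (hh : h.IsSwap) (hgh : g ≠ h)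
    (hdisj : Disjoint g.support h.support) :
    {w : Equiv.Perm (Fin n) | (CT n).Adj g w ∧ (CT n).Adj h w} = {1, g * h} ∧
    Nat.card {w : Equiv.Perm (Fin n) | w ≠ 1 ∧ (CT n).Adj g w ∧ (CT n).Adj h w} = 1 :=
  stmt_0_general g h hg hh hdisj
end

section
/- Let g and h be distinct transpositions in S_n (n ≥ 3) whose supports intersect in exactly one point (so gh ≠ hg). Then the common neighbors of g and h in the complete transposition graph CT_n are exactly the three elements id, gh, and hg; hence there are exactly two 4-cycles in CT_n passing through the path (g, id, h). -/
/-!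
Write `g = (x b)` and `h = (x d)`. A common neighbour `w` of `g` and `h` has the form
`w = t * g` with `t` and `t * (g * h)` both transpositions. A transposition `t` such that `t * σ`
is again a transposition can only move points moved by `σ`; as `g * h` is the 3-cycle on
`{x, b, d}`, `t` is one of the three transpositions of `{x, b, d}`, and these give
`w = 1`, `g * h` and `h * g`.
-/

open Equiv Equiv.Perm

namespace Equiv.Perm.IsSwap

variable {α : Type*} [DecidableEq α]

theorem eq_swap_apply {u : Perm α} (hu : u.IsSwap) {x : α} (hx : u x ≠ x) :
    u = swap x (u x) := by
  obtain ⟨p, q, hpq, rfl⟩ := hu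
  rcases eq_or_ne x p with rfl | hxp
  · rw [swap_apply_left]
  rcases eq_or_ne x q with rfl | hxq
  · rw [swap_apply_right, swap_comm]
  · exact absurd (swap_apply_of_ne_of_ne hxp hxq) hx

/-- At a point fixed by `σ`, `t` and `t * σ` agree, and a transposition is determined by any
point it moves. -/
theorem apply_ne_of_isSwap_mul {t σ : Perm α} (ht : t.IsSwap) (htσ : (t * σ).IsSwap)
    (hσ : σ ≠ 1) {x : α} (hx : t x ≠ x) : σ x ≠ x := by
  intro hσx
  have htσx : (t * σ) x = t x := by rw [mul_apply, hσx]
  have : t * σ = t := by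
    rw [htσ.eq_swap_apply (htσx ▸ hx), htσx, ← ht.eq_swap_apply hx]
  exact hσ (mul_eq_left.mp this)

theorem eq_or_eq_or_eq_of_support_subset [Fintype α] {t : Perm α} (ht : t.IsSwap) {a b c : α}
    (hsupp : t.support ⊆ {a, b, c}) : t = swap a b ∨ t = swap a c ∨ t = swap b c := by
  obtain ⟨p, q, hpq, rfl⟩ := ht
  rw [support_swap hpq, Finset.insert_subset_iff, Finset.singleton_subset_iff] at hsupp
  simp only [Finset.mem_insert, Finset.mem_singleton] at hsupp
  obtain ⟨hp | hp | hp, hq | hq | hq⟩ := hsupp <;> subst hp hq <;>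
    simp_all [swap_comm]

end Equiv.Perm.IsSwap

namespace Equiv.Perm

variable {α : Type*} [DecidableEq α] {x b d : α}

theorem support_swap_mul_swap_of_ne [Fintype α] (hb : x ≠ b) (hd : x ≠ d) (hbd : b ≠ d) :
    (swap x b * swap x d).support = {b, x, d} := by
  rw [swap_comm x b]
  exact support_swap_mul_swap (by simp [hd, hbd, hb.symm])

theorem swap_mul_swap_ne_one [Finite α] (hb : x ≠ b) (hd : x ≠ d) (hbd : b ≠ d) :
    swap x b * swap x d ≠ 1 := by
  have := Fintype.ofFinite α
  rw [Ne, ← support_eq_empty_iff, support_swap_mul_swap_of_ne hb hd hbd]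
  exact Finset.insert_ne_empty _ _

theorem swap_mul_swap_ne_swap_mul_swap (hb : x ≠ b) (hd : x ≠ d) (hbd : b ≠ d) :
    swap x b * swap x d ≠ swap x d * swap x b := by
  intro h
  have hx := congrArg (· x) h
  simp only [mul_apply, swap_apply_left, swap_apply_of_ne_of_ne hd.symm hbd.symm,
    swap_apply_of_ne_of_ne hb.symm hbd] at hx
  exact hbd hx.symm

theorem isSwap_mul_swap_and_isSwap_mul_swap_iff [Finite α] (hb : x ≠ b) (hd : x ≠ d)
    (hbd : b ≠ d) (w : Perm α) :
    (w * swap x b).IsSwap ∧ (w * swap x d).IsSwap ↔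
      w = 1 ∨ w = swap x b * swap x d ∨ w = swap x d * swap x b := by
  have := Fintype.ofFinite α
  have hconj {c e : α} (hc : c ≠ x) (hce : c ≠ e) :
      swap x e * swap x c * swap x e = swap e c := by
    rw [swap_comm x c]
    exact swap_mul_swap_mul_swap hc hce
  constructor
  · rintro ⟨hwb, hwd⟩
    obtain ⟨t, rfl⟩ : ∃ t, w = t * swap x b := ⟨_, (mul_swap_mul_self _ _ _).symm⟩
    rw [mul_swap_mul_self] at hwb
    have ht : (t * (swap x b * swap x d)).IsSwap := by rwa [← mul_assoc]
    have hsupp : t.support ⊆ {b, x, d} := fun y hy => by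
      rw [← support_swap_mul_swap_of_ne hb hd hbd, mem_support]
      exact hwb.apply_ne_of_isSwap_mul ht (swap_mul_swap_ne_one hb hd hbd) (mem_support.mp hy)
    rcases hwb.eq_or_eq_or_eq_of_support_subset hsupp with rfl | rfl | rfl
    · left; rw [swap_comm, swap_mul_self]
    · right; left; rw [← hconj hd.symm hbd.symm, mul_swap_mul_self]
    · right; right; rfl
  · rintro (rfl | rfl | rfl)
    · simp only [one_mul]
      exact ⟨⟨x, b, hb, rfl⟩, ⟨x, d, hd, rfl⟩⟩
    · rw [hconj hd.symm hbd.symm, mul_swap_mul_self]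
      exact ⟨⟨b, d, hbd, rfl⟩, ⟨x, b, hb, rfl⟩⟩
    · rw [mul_swap_mul_self, hconj hb.symm hbd]
      exact ⟨⟨x, d, hd, rfl⟩, ⟨d, b, hbd.symm, rfl⟩⟩

end Equiv.Perm

theorem CT_adj_swap_iff {n : ℕ} {a b : Fin n} {w : Perm (Fin n)} :
    (CT n).Adj (swap a b) w ↔ (w * swap a b).IsSwap :=
  Iff.rfl

theorem stmt_1_general {n : ℕ} (g h : Equiv.Perm (Fin n))
    (hg : g.IsSwap) (hh : h.IsSwap) (hgh : g ≠ h)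
    (hcap : (g.support ∩ h.support).card = 1) :
    {w : Equiv.Perm (Fin n) | (CT n).Adj g w ∧ (CT n).Adj h w} = {1, g * h, h * g} ∧
    Nat.card {w : Equiv.Perm (Fin n) | w ≠ 1 ∧ (CT n).Adj g w ∧ (CT n).Adj h w} = 2 := by
  obtain ⟨x, hx⟩ := Finset.card_pos.mp (hcap ▸ Nat.one_pos)
  rw [Finset.mem_inter, mem_support, mem_support] at hx
  obtain ⟨b, rfl⟩ : ∃ b, g = swap x b := ⟨_, hg.eq_swap_apply hx.1⟩
  obtain ⟨d, rfl⟩ : ∃ d, h = swap x d := ⟨_, hh.eq_swap_apply hx.2⟩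
  obtain ⟨hbx, hdx⟩ : b ≠ x ∧ d ≠ x := by simpa only [swap_apply_left] using hx
  have hbd : b ≠ d := by rintro rfl; exact hgh rfl
  have hN := isSwap_mul_swap_and_isSwap_mul_swap_iff hbx.symm hdx.symm hbd
  simp only [CT_adj_swap_iff]
  refine ⟨Set.ext hN, ?_⟩
  have hpair : {w | w ≠ 1 ∧ (w * swap x b).IsSwap ∧ (w * swap x d).IsSwap} =
      {swap x b * swap x d, swap x d * swap x b} := by
    ext w
    have := swap_mul_swap_ne_one hbx.symm hdx.symm hbd
    have := swap_mul_swap_ne_one hdx.symm hbx.symm hbd.symm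
    rw [Set.mem_ofPred_eq, hN, Set.mem_insert_iff, Set.mem_singleton_iff]
    grind
  rw [hpair, Nat.card_coe_set_eq,
    Set.ncard_pair (swap_mul_swap_ne_swap_mul_swap hbx.symm hdx.symm hbd)]

/-- Common neighbors of two transpositions whose supports meet in exactly one point
are exactly `id`, `g*h` and `h*g`; hence exactly two 4-cycles through `(g, id, h)`. -/
theorem stmt_1 {n : ℕ} (hn : 3 ≤ n) (g h : Equiv.Perm (Fin n))
    (hg : g.IsSwap) (hh : h.IsSwap) (hgh : g ≠ h)
    (hcap : (g.support ∩ h.support).card = 1) :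
    {w : Equiv.Perm (Fin n) | (CT n).Adj g w ∧ (CT n).Adj h w} = {1, g * h, h * g} ∧
    Nat.card {w : Equiv.Perm (Fin n) | w ≠ 1 ∧ (CT n).Adj g w ∧ (CT n).Adj h w} = 2 :=
  stmt_1_general g h hg hh hgh hcap
end

section
/- Let (u, x, z) be a 2-path in CT_n (n ≥ 3), i.e., u and z are distinct neighbors of x. If the transpositions u·x⁻¹ and z·x⁻¹ have disjoint supports, then the unique common neighbor of u and z other than x is z·x⁻¹·u; in particular there is a unique 4-cycle in CT_n containing the path (u, x, z). -/
/-! Write `σ = u x⁻¹` and `τ = z x⁻¹`. A common neighbour `w` of `u` and `z` gives transpositions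
`ρ = w u⁻¹` and `π = w z⁻¹` with `ρ π = σ τ`. Since `σ τ` moves four points, so does `ρ π`, forcing
`ρ` and `π` to be disjoint; the disjoint cycle decomposition is unique, so `{ρ, π} = {σ, τ}`.
Now `ρ = σ` means `w = x`, and `ρ = τ` means `w = z x⁻¹ u`. -/

namespace Equiv.Perm

variable {α : Type*} [DecidableEq α]

theorem IsSwap.inv_eq_s9 {f : Perm α} (hf : f.IsSwap) : f⁻¹ = f := by
  obtain ⟨a, b, -, rfl⟩ := hf
  exact swap_inv a b

variable [Fintype α]

theorem disjoint_of_card_support_le_card_support_mul {f g : Perm α}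
    (h : f.support.card + g.support.card ≤ (f * g).support.card) : Disjoint f g := by
  rw [disjoint_iff_disjoint_support, ← Finset.card_union_eq_card_add_card]
  have hmul : (f * g).support.card ≤ (f.support ∪ g.support).card :=
    Finset.card_le_card (support_mul_le f g)
  exact le_antisymm (Finset.card_union_le _ _) (h.trans hmul)

theorem IsSwap.cycleFactorsFinset_mul {σ τ : Perm α} (hσ : σ.IsSwap) (hτ : τ.IsSwap)
    (hστ : Disjoint σ τ) : (σ * τ).cycleFactorsFinset = {σ, τ} := by
  rw [hστ.cycleFactorsFinset_mul_eq_union, hσ.isCycle.cycleFactorsFinset_eq_singleton,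
    hτ.isCycle.cycleFactorsFinset_eq_singleton, Finset.insert_eq]

theorem IsSwap.pair_eq_of_mul_eq_mul {f g σ τ : Perm α} (hf : f.IsSwap) (hg : g.IsSwap)
    (hσ : σ.IsSwap) (hτ : τ.IsSwap) (hστ : Disjoint σ τ) (h : f * g = σ * τ) :
    ({f, g} : Finset (Perm α)) = {σ, τ} := by
  have hfg : Disjoint f g := by
    apply disjoint_of_card_support_le_card_support_mul
    rw [h, hστ.card_support_mul, card_support_eq_two.2 hf, card_support_eq_two.2 hg,
      card_support_eq_two.2 hσ, card_support_eq_two.2 hτ]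
  rw [← hf.cycleFactorsFinset_mul hg hfg, h, hσ.cycleFactorsFinset_mul hτ hστ]

theorem eq_or_eq_of_isSwap_mul_inv {u x z w : Perm α} (hxu : (u * x⁻¹).IsSwap)
    (hxz : (z * x⁻¹).IsSwap) (hd : Disjoint (u * x⁻¹) (z * x⁻¹)) (hu : (w * u⁻¹).IsSwap)
    (hz : (w * z⁻¹).IsSwap) : w = x ∨ w = z * x⁻¹ * u := by
  have hprod : (w * u⁻¹) * (w * z⁻¹) = (u * x⁻¹) * (z * x⁻¹) :=
    calc (w * u⁻¹) * (w * z⁻¹) = (w * u⁻¹)⁻¹ * (w * z⁻¹) := by rw [hu.inv_eq_s9]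
      _ = (u * x⁻¹) * (z * x⁻¹)⁻¹ := by group
      _ = (u * x⁻¹) * (z * x⁻¹) := by rw [hxz.inv_eq_s9]
  have hmem : w * u⁻¹ ∈ ({u * x⁻¹, z * x⁻¹} : Finset (Perm α)) := by
    rw [← hu.pair_eq_of_mul_eq_mul hz hxu hxz hd hprod]
    exact Finset.mem_insert_self _ _
  rcases Finset.mem_insert.1 hmem with h | h
  · rw [← hxu.inv_eq_s9, mul_inv_rev, inv_inv] at h
    exact .inl (mul_right_cancel h)
  · exact .inr (mul_inv_eq_iff_eq_mul.1 (Finset.mem_singleton.1 h))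

end Equiv.Perm

open Equiv.Perm in
theorem stmt_9_general {n : ℕ} (u x z : Equiv.Perm (Fin n))
    (hxu : (CT n).Adj x u) (hxz : (CT n).Adj x z)
    (hdisj : Disjoint (u * x⁻¹).support (z * x⁻¹).support) :
    {w : Equiv.Perm (Fin n) | (CT n).Adj u w ∧ (CT n).Adj z w ∧ w ≠ x} = {z * x⁻¹ * u} := by
  have hστ : Equiv.Perm.Disjoint (u * x⁻¹) (z * x⁻¹) := disjoint_iff_disjoint_support.2 hdisj
  ext w
  constructor
  · rintro ⟨hu, hz, hwx⟩
    exact (eq_or_eq_of_isSwap_mul_inv hxu hxz hστ hu hz).resolve_left hwx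
  · rintro rfl
    refine ⟨?_, ?_, ?_⟩
    · show (z * x⁻¹ * u * u⁻¹).IsSwap
      rwa [mul_inv_cancel_right]
    · show (z * x⁻¹ * u * z⁻¹).IsSwap
      have hconj : z * x⁻¹ * u * z⁻¹ = (z * x⁻¹) * (u * x⁻¹) * (z * x⁻¹)⁻¹ := by group
      rwa [hconj, hστ.symm.commute.eq, mul_inv_cancel_right]
    · intro h
      have hone : (u * x⁻¹) * (z * x⁻¹) = 1 := by
        rw [hστ.commute.eq, ← mul_assoc, h, mul_inv_cancel]
      exact hxu.isCycle.ne_one (hστ.mul_eq_one_iff.1 hone).1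

/-- If `(u, x, z)` is a 2-path in `CT n` and the transpositions `u*x⁻¹`, `z*x⁻¹`
have disjoint supports, then the unique common neighbor of `u` and `z` other than
`x` is `z*x⁻¹*u`; hence a unique 4-cycle contains the path `(u,x,z)`. -/
theorem stmt_9 {n : ℕ} (hn : 3 ≤ n) (u x z : Equiv.Perm (Fin n))
    (hxu : (CT n).Adj x u) (hxz : (CT n).Adj x z) (huz : u ≠ z)
    (hdisj : Disjoint (u * x⁻¹).support (z * x⁻¹).support) :
    {w : Equiv.Perm (Fin n) | (CT n).Adj u w ∧ (CT n).Adj z w ∧ w ≠ x} = {z * x⁻¹ * u} :=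
  stmt_9_general u x z hxu hxz hdisj
end

section
/- Let (u, x, z) be a 2-path in CT_n (n ≥ 3) such that the supports of the transpositions u·x⁻¹ and z·x⁻¹ intersect in exactly one point. Then the common neighbors of u and z in CT_n are exactly x, z·x⁻¹·u, and u·x⁻¹·z, and the latter two are distinct; hence exactly two 4-cycles of CT_n contain the path (u, x, z). -/
open Equiv Equiv.Perm

namespace Equiv.Perm

variable {α : Type*} [DecidableEq α]

theorem IsSwap.eq_swap_apply_s10 {σ : Perm α} (hσ : σ.IsSwap) {p : α} (hp : σ p ≠ p) :
    σ = swap p (σ p) := by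
  obtain ⟨i, j, -, rfl⟩ := hσ
  rcases (swap_apply_ne_self_iff.mp hp).2 with rfl | rfl
  · rw [swap_apply_left]
  · rw [swap_apply_right, swap_comm]

/-- A point `p` moved by `σ` but fixed by `σ * τ` has `τ p = σ p`, which forces `τ = σ`. -/
theorem IsSwap.support_subset_support_mul [Fintype α] {σ τ : Perm α} (hσ : σ.IsSwap)
    (hτ : τ.IsSwap) (h : σ * τ ≠ 1) : σ.support ⊆ (σ * τ).support := by
  intro p hp
  rw [mem_support] at hp ⊢
  intro hfix
  have hτp : τ p = σ p := by
    obtain ⟨i, j, -, rfl⟩ := hσ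
    exact swap_apply_eq_iff.mp hfix
  refine h ?_
  rw [hσ.eq_swap_apply_s10 hp, hτ.eq_swap_apply_s10 (hτp ▸ hp), hτp, swap_mul_self]

theorem exists_swap_swap_of_card_support_inter_eq_one [Fintype α] {σ τ : Perm α}
    (hσ : σ.IsSwap) (hτ : τ.IsSwap) (h : (σ.support ∩ τ.support).card = 1) :
    ∃ a b c, a ≠ b ∧ a ≠ c ∧ b ≠ c ∧ σ = swap a b ∧ τ = swap a c := by
  obtain ⟨a, ha⟩ := Finset.card_eq_one.mp h
  have hainter : a ∈ σ.support ∩ τ.support := by rw [ha]; exact Finset.mem_singleton_self a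
  have hσa : σ a ≠ a := mem_support.mp (Finset.mem_of_mem_inter_left hainter)
  have hτa : τ a ≠ a := mem_support.mp (Finset.mem_of_mem_inter_right hainter)
  refine ⟨a, σ a, τ a, hσa.symm, hτa.symm, fun hστ => hσa ?_, hσ.eq_swap_apply_s10 hσa,
    hτ.eq_swap_apply_s10 hτa⟩
  have hmem : σ a ∈ σ.support ∩ τ.support := Finset.mem_inter.mpr
    ⟨apply_mem_support.mpr (mem_support.mpr hσa),
      hστ ▸ apply_mem_support.mpr (mem_support.mpr hτa)⟩
  simpa [ha] using hmem

variable {a b c : α}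

theorem swap_mul_swap_eq_swap_mul_swap (hca : c ≠ a) (hcb : c ≠ b) :
    swap a b * swap a c = swap b c * swap a b := by
  rw [mul_swap_eq_swap_mul, swap_apply_left, swap_apply_of_ne_of_ne hca hcb]

theorem swap_mul_swap_ne_swap_mul_swap_s10 (hab : a ≠ b) (hac : a ≠ c) (hbc : b ≠ c) :
    swap a c * swap a b ≠ swap a b * swap a c := by
  intro h
  have hb := congrArg (· b) h
  simp only [mul_apply, swap_apply_right, swap_apply_left,
    swap_apply_of_ne_of_ne hab.symm hbc] at hb
  exact hac hb.symm

theorem isSwap_and_isSwap_mul_swap_mul_swap_iff [Fintype α] (hab : a ≠ b) (hac : a ≠ c)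
    (hbc : b ≠ c) (σ : Perm α) :
    σ.IsSwap ∧ (σ * (swap a b * swap a c)).IsSwap ↔
      σ = swap a b ∨ σ = swap a c ∨ σ = swap b c := by
  constructor
  · rintro ⟨⟨i, j, hij, rfl⟩, hστ⟩
    have hρ : swap a b * swap a c ≠ 1 := by
      intro h
      have hc := congrArg (fun f => f c) h
      simp only [mul_apply, swap_apply_right, swap_apply_left, Perm.one_apply] at hc
      exact hbc hc
    have hsub := (swap_isSwap_iff.mpr hij).support_subset_support_mul hστ
      (by rwa [swap_mul_self_mul])
    rw [swap_mul_self_mul, swap_comm a b, support_swap_mul_swap (by simp [*, Ne.symm hab]),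
      support_swap hij] at hsub
    have hi : i ∈ ({b, a, c} : Finset α) := hsub (by simp)
    have hj : j ∈ ({b, a, c} : Finset α) := hsub (by simp)
    simp only [Finset.mem_insert, Finset.mem_singleton] at hi hj
    rcases hi with rfl | rfl | rfl <;> rcases hj with rfl | rfl | rfl <;>
      simp_all [swap_comm]
  · rintro (rfl | rfl | rfl)
    · exact ⟨swap_isSwap_iff.mpr hab, by rwa [swap_mul_self_mul, swap_isSwap_iff]⟩
    · refine ⟨swap_isSwap_iff.mpr hac, ?_⟩
      rw [← mul_assoc, swap_comm a b, swap_mul_swap_mul_swap hab.symm hbc, swap_isSwap_iff]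
      exact hbc.symm
    · rw [swap_mul_swap_eq_swap_mul_swap hac.symm hbc.symm, swap_mul_self_mul]
      exact ⟨swap_isSwap_iff.mpr hbc, swap_isSwap_iff.mpr hab⟩

end Equiv.Perm

theorem CT_commonNeighbors_swap_mul {n : ℕ} {a b c : Fin n} (hab : a ≠ b) (hac : a ≠ c)
    (hbc : b ≠ c) (x : Perm (Fin n)) :
    (CT n).commonNeighbors (swap a b * x) (swap a c * x) =
      {x, swap a c * (swap a b * x), swap a b * (swap a c * x)} := by
  ext w
  obtain ⟨σ, rfl⟩ : ∃ σ, w = σ * (swap a b * x) := ⟨w * (swap a b * x)⁻¹, by group⟩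
  have hadj : (CT n).Adj (swap a b * x) (σ * (swap a b * x)) ∧
      (CT n).Adj (swap a c * x) (σ * (swap a b * x)) ↔
      σ.IsSwap ∧ (σ * (swap a b * swap a c)).IsSwap := by
    simp only [CT, mul_inv_rev, swap_inv, ← mul_assoc, mul_inv_cancel_right, mul_swap_mul_self]
  have hsts : swap a b * (swap a c * x) = swap b c * (swap a b * x) := by
    rw [← mul_assoc, swap_mul_swap_eq_swap_mul_swap hac.symm hbc.symm, mul_assoc]
  rw [SimpleGraph.mem_commonNeighbors, hadj, isSwap_and_isSwap_mul_swap_mul_swap_iff hab hac hbc,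
    Set.mem_insert_iff, Set.mem_insert_iff, Set.mem_singleton_iff, hsts]
  simp only [← mul_assoc, mul_left_inj, mul_eq_right, mul_eq_one_iff_eq_inv, swap_inv]

theorem stmt_10_general {n : ℕ} (u x z : Equiv.Perm (Fin n))
    (hxu : (CT n).Adj x u) (hxz : (CT n).Adj x z)
    (hcap : ((u * x⁻¹).support ∩ (z * x⁻¹).support).card = 1) :
    {w : Equiv.Perm (Fin n) | (CT n).Adj u w ∧ (CT n).Adj z w} = {x, z * x⁻¹ * u, u * x⁻¹ * z} ∧
    z * x⁻¹ * u ≠ u * x⁻¹ * z := by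
  obtain ⟨a, b, c, hab, hac, hbc, hu, hz⟩ :=
    exists_swap_swap_of_card_support_inter_eq_one hxu hxz hcap
  rw [mul_inv_eq_iff_eq_mul] at hu hz
  subst hu hz
  simp only [mul_inv_cancel_right]
  refine ⟨CT_commonNeighbors_swap_mul hab hac hbc x, ?_⟩
  rw [← mul_assoc, ← mul_assoc, Ne, mul_left_inj]
  exact swap_mul_swap_ne_swap_mul_swap_s10 hab hac hbc

/-- If `(u, x, z)` is a 2-path in `CT n` and the supports of `u*x⁻¹`, `z*x⁻¹` meet
in exactly one point, then the common neighbors of `u` and `z` are exactly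
`x`, `z*x⁻¹*u` and `u*x⁻¹*z`, the latter two being distinct; hence exactly two
4-cycles of `CT n` contain the path `(u, x, z)`. -/
theorem stmt_10 {n : ℕ} (hn : 3 ≤ n) (u x z : Equiv.Perm (Fin n))
    (hxu : (CT n).Adj x u) (hxz : (CT n).Adj x z) (huz : u ≠ z)
    (hcap : ((u * x⁻¹).support ∩ (z * x⁻¹).support).card = 1) :
    {w : Equiv.Perm (Fin n) | (CT n).Adj u w ∧ (CT n).Adj z w} = {x, z * x⁻¹ * u, u * x⁻¹ * z} ∧
    z * x⁻¹ * u ≠ u * x⁻¹ * z :=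
  stmt_10_general u x z hxu hxz hcap
end

section
/- For any cycle C = (u_0, u_1, ..., u_{2l} = u_0) of length 2l (l ≥ 2) in CT_n, the support of C, defined as the union over all edges {u_{i-1}, u_i} of the support of the transposition u_i·u_{i-1}⁻¹, has cardinality at most 2l. -/
namespace Equiv.Perm

variable {α : Type*} (u : ℕ → Perm α) {a : α}

theorem mul_inv_apply_eq_of_forall_step_apply_eq {k m : ℕ} (hkm : k ≤ m)
    (hfix : ∀ i, k ≤ i → i < m → (u (i + 1) * (u i)⁻¹) a = a) :
    (u m * (u k)⁻¹) a = a := by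
  induction m, hkm using Nat.le_induction with
  | base => simp
  | succ m hkm ih =>
    have hsplit : u (m + 1) * (u k)⁻¹ = (u (m + 1) * (u m)⁻¹) * (u m * (u k)⁻¹) := by group
    rw [hsplit, mul_apply, ih fun i hki him => hfix i hki (by omega), hfix m hkm (by omega)]

theorem mul_inv_apply_ne_of_unique_step_apply_ne {j m : ℕ} (hjm : j < m)
    (hj : (u (j + 1) * (u j)⁻¹) a ≠ a)
    (hfix : ∀ i < m, i ≠ j → (u (i + 1) * (u i)⁻¹) a = a) :
    (u m * (u 0)⁻¹) a ≠ a := by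
  have hbefore : (u j * (u 0)⁻¹) a = a :=
    mul_inv_apply_eq_of_forall_step_apply_eq u (Nat.zero_le j)
      fun i _ hij => hfix i (by omega) (by omega)
  have hafter : (u m * (u (j + 1))⁻¹) a = a :=
    mul_inv_apply_eq_of_forall_step_apply_eq u hjm
      fun i hji him => hfix i him (by omega)
  have hsplit : u m * (u 0)⁻¹ =
      (u m * (u (j + 1))⁻¹) * (u (j + 1) * (u j)⁻¹) * (u j * (u 0)⁻¹) := by group
  rw [hsplit, mul_apply, mul_apply, hbefore]
  intro h
  exact hj ((u m * (u (j + 1))⁻¹).injective (h.trans hafter.symm))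

theorem exists_ne_step_mem_support_of_closed [DecidableEq α] [Fintype α] {j m : ℕ}
    (hclosed : u m = u 0) (hjm : j < m) (hj : a ∈ (u (j + 1) * (u j)⁻¹).support) :
    ∃ i < m, i ≠ j ∧ a ∈ (u (i + 1) * (u i)⁻¹).support := by
  by_contra! hfix
  refine mul_inv_apply_ne_of_unique_step_apply_ne u hjm (mem_support.mp hj)
    (fun i him hij => notMem_support.mp (hfix i him hij)) ?_
  rw [hclosed, mul_inv_cancel, one_apply]

theorem card_biUnion_support_le_of_isSwap_of_closed [DecidableEq α] [Fintype α] {m : ℕ}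
    (hswap : ∀ i < m, (u (i + 1) * (u i)⁻¹).IsSwap) (hclosed : u m = u 0) :
    ((Finset.range m).biUnion fun i => (u (i + 1) * (u i)⁻¹).support).card ≤ m := by
  set S := (Finset.range m).biUnion fun i => (u (i + 1) * (u i)⁻¹).support
  let moves (a : α) (i : ℕ) : Prop := a ∈ (u (i + 1) * (u i)⁻¹).support
  have hmoved_twice : ∀ a ∈ S, 2 ≤ ((Finset.range m).bipartiteAbove moves a).card := by
    intro a ha
    obtain ⟨j, hj, hja⟩ := Finset.mem_biUnion.mp ha
    obtain ⟨i, him, hij, hia⟩ :=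
      exists_ne_step_mem_support_of_closed u hclosed (Finset.mem_range.mp hj) hja
    exact Finset.one_lt_card.mpr ⟨j, (Finset.mem_bipartiteAbove moves).mpr ⟨hj, hja⟩,
      i, (Finset.mem_bipartiteAbove moves).mpr ⟨Finset.mem_range.mpr him, hia⟩, hij.symm⟩
  have hmoves_two : ∀ i ∈ Finset.range m, (S.bipartiteBelow moves i).card ≤ 2 := by
    intro i hi
    rw [← card_support_eq_two.mpr (hswap i (Finset.mem_range.mp hi))]
    exact Finset.card_le_card fun a ha => ((Finset.mem_bipartiteBelow moves).mp ha).2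
  have := Finset.card_mul_le_card_mul moves hmoved_twice hmoves_two
  rw [Finset.card_range] at this
  omega

end Equiv.Perm

theorem stmt_11_general {n l : ℕ} (u : ℕ → Equiv.Perm (Fin n))
    (hadj : ∀ i < 2 * l, (CT n).Adj (u i) (u (i + 1)))
    (hclosed : u (2 * l) = u 0) :
    ((Finset.range (2 * l)).biUnion (fun i => (u (i + 1) * (u i)⁻¹).support)).card ≤ 2 * l :=
  Equiv.Perm.card_biUnion_support_le_of_isSwap_of_closed u hadj hclosed

/-- The support of a `2l`-cycle `(u 0, u 1, …, u (2l) = u 0)` in `CT n` has at most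
`2l` elements. -/
theorem stmt_11 {n l : ℕ} (hl : 2 ≤ l) (u : ℕ → Equiv.Perm (Fin n))
    (hadj : ∀ i < 2 * l, (CT n).Adj (u i) (u (i + 1)))
    (hclosed : u (2 * l) = u 0)
    (hinj : ∀ i j, i < 2 * l → j < 2 * l → u i = u j → i = j) :
    ((Finset.range (2 * l)).biUnion (fun i => (u (i + 1) * (u i)⁻¹).support)).card ≤ 2 * l :=
  stmt_11_general u hadj hclosed
end

section
/- Let w_1, ..., w_{2l} be transpositions in S_n with w_{2l}·w_{2l-1}·...·w_1 = id. Then every point in the union of the supports of the w_i lies in the support of at least two of the w_i; consequently the union of the supports has cardinality at most 2l. -/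
open Finset

theorem List.prod_smul_ne_self_of_countP_eq_one {G α : Type*} [Group G] [MulAction G α]
    [DecidableEq α] {x : α} :
    ∀ {L : List G}, L.countP (fun g => g • x ≠ x) = 1 → L.prod • x ≠ x
  | [], h => by simp at h
  | g :: L, h => by
    rw [List.prod_cons, mul_smul]
    by_cases hg : g • x = x
    · have hL : L.countP (fun g => g • x ≠ x) = 1 := by simpa [hg] using h
      exact fun hfix => prod_smul_ne_self_of_countP_eq_one hL
        ((smul_left_cancel_iff g).mp (hfix.trans hg.symm))
    · have hL : L.countP (fun g => g • x ≠ x) = 0 := by simpa [hg] using h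
      have hfix : L.prod ∈ MulAction.stabilizer G x :=
        Subgroup.list_prod_mem (K := MulAction.stabilizer G x) fun g hg' => by
          simpa using List.countP_eq_zero.mp hL g hg'
      rwa [MulAction.mem_stabilizer_iff.mp hfix]

theorem List.countP_ofFn {α : Type*} {m : ℕ} (p : α → Bool) (w : Fin m → α) :
    (List.ofFn w).countP p = #{i | p (w i)} := by
  induction m with
  | zero => simp
  | succ m ih =>
    rw [List.ofFn_succ, List.countP_cons, ih, card_filter, card_filter, Fin.sum_univ_succ]
    simp only [add_comm]

theorem card_filter_smul_ne_self_ne_one {G α : Type*} [Group G] [MulAction G α] [DecidableEq α]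
    {m : ℕ} (w : Fin m → G) {x : α} (hprod : (List.ofFn w).prod • x = x) :
    #{i | w i • x ≠ x} ≠ 1 := by
  intro h
  refine List.prod_smul_ne_self_of_countP_eq_one ?_ hprod
  simpa [List.countP_ofFn] using h

theorem stmt_12 {n l : ℕ} (w : Fin (2 * l) → Equiv.Perm (Fin n))
    (hw : ∀ i, (w i).IsSwap)
    (hprod : (List.ofFn w).prod = 1) :
    (∀ x : Fin n, x ∈ Finset.univ.biUnion (fun i => (w i).support) →
      ∃ i j, i ≠ j ∧ x ∈ (w i).support ∧ x ∈ (w j).support) ∧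
    (Finset.univ.biUnion (fun i => (w i).support)).card ≤ 2 * l := by
  set U := univ.biUnion fun i => (w i).support
  have hmult : ∀ x ∈ U, 2 ≤ #{i | x ∈ (w i).support} := by
    intro x hx
    obtain ⟨i, -, hi⟩ := mem_biUnion.mp hx
    have hne_zero : #{i | x ∈ (w i).support} ≠ 0 :=
      card_ne_zero_of_mem (mem_filter.mpr ⟨mem_univ i, hi⟩)
    have hne_one : #{i | x ∈ (w i).support} ≠ 1 := by
      simpa using card_filter_smul_ne_self_ne_one w (x := x) (by simp [hprod])
    omega
  refine ⟨fun x hx => ?_, ?_⟩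
  · obtain ⟨i, hi, j, hj, hij⟩ := one_lt_card.mp (hmult x hx)
    exact ⟨i, j, hij, (mem_filter.mp hi).2, (mem_filter.mp hj).2⟩
  · have hcount : #U * 2 ≤ #(univ : Finset (Fin (2 * l))) * 2 :=
      card_mul_le_card_mul (fun x i => x ∈ (w i).support) hmult fun i _ =>
        (card_le_card fun _ ha => (mem_filter.mp ha).2).trans
          (Equiv.Perm.card_support_eq_two.mpr (hw i)).le
    simpa using hcount
end

section
/- Let G be a C_{4a+4b-2}-free subgraph of CT_n, and let C and C' be cycles in G of lengths 4a and 4b respectively (a, b ≥ 2) sharing at least one common edge. Then |supp(C) ∩ supp(C')| ≥ 3, where supp of a cycle is the union of the supports of the transpositions corresponding to its edges. -/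
/-- The support of an edge `{u, z}` of `CT n`: the set of moved points of the
transposition `z * u⁻¹`. -/
def edgeSupport {n : ℕ} (e : Sym2 (Equiv.Perm (Fin n))) : Finset (Fin n) :=
  Sym2.lift ⟨fun u z => (z * u⁻¹).support, by
    intro u z
    show (z * u⁻¹).support = (u * z⁻¹).support
    conv_rhs => rw [← Equiv.Perm.support_inv]
    rw [mul_inv_rev, inv_inv]⟩ e

/-- The support of a walk: the union of the supports of its edges. -/
def walkSupport {n : ℕ} {G : SimpleGraph (Equiv.Perm (Fin n))} {x y : Equiv.Perm (Fin n)}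
    (c : G.Walk x y) : Finset (Fin n) :=
  (c.edges.map edgeSupport).foldr (· ∪ ·) ∅

/-!
Let `s(u, z)` be a common edge, corresponding to the transposition `t = z * u⁻¹`. If the supports of
the two cycles shared at most two points, they would share exactly the support of `t`. For a vertex
`w` on both cycles, the permutation `w * u⁻¹` is a product of transpositions along either cycle, so
its support lies in both cycle supports, hence in that of `t`; thus `w * u⁻¹ ∈ {1, t}`, i.e.
`w ∈ {u, z}`. The two cycles therefore meet only in the edge `s(u, z)`, and deleting it from both
leaves two internally disjoint `u`–`z` paths forming a cycle of length `4a + 4b - 2`.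
-/

open SimpleGraph Equiv

namespace Equiv.Perm

variable {α : Type*} [DecidableEq α] [Fintype α]

theorem eq_one_or_eq_of_support_subset_of_isSwap {σ τ : Perm α} (hτ : τ.IsSwap)
    (h : σ.support ⊆ τ.support) : σ = 1 ∨ σ = τ := by
  obtain ⟨x, y, hxy, rfl⟩ := hτ
  refine or_iff_not_imp_left.2 fun hσ => ?_
  rw [support_swap hxy] at h
  have hsupp : σ.support = {x, y} :=
    Finset.eq_of_subset_of_card_le h
      ((Finset.card_pair hxy).trans_le (two_le_card_support_of_ne_one hσ))
  obtain ⟨a, b, hab, rfl⟩ := card_support_eq_two.1 (by rw [hsupp, Finset.card_pair hxy])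
  rw [support_swap hab, ← Finset.coe_inj, Finset.coe_pair, Finset.coe_pair,
    Set.pair_eq_pair_iff] at hsupp
  rcases hsupp with ⟨rfl, rfl⟩ | ⟨rfl, rfl⟩
  · rfl
  · exact swap_comm _ _

end Equiv.Perm

namespace SimpleGraph.Walk

variable {V : Type*} {G : SimpleGraph V}

theorem IsCycle.exists_isPath_length_add_one [DecidableEq V] {v u z : V} {c : G.Walk v v}
    (hc : c.IsCycle) (he : s(u, z) ∈ c.edges) :
    ∃ p : G.Walk u z, p.IsPath ∧ p.length + 1 = c.length ∧ ∀ w ∈ p.support, w ∈ c.support := by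
  have huz : u ≠ z := G.ne_of_adj (c.adj_of_mem_edges he)
  have hu : u ∈ c.support := c.fst_mem_support_of_mem_edges he
  set d := c.rotate u hu
  have hd : d.IsCycle := hc.rotate hu
  have he' : s(u, z) ∈ d.edges := (c.rotate_edges u hu).mem_iff.2 he
  have hz : z ∈ d.support := d.snd_mem_support_of_mem_edges he'
  have hspec := d.take_spec hz
  have htake : (d.takeUntil z hz).IsPath := hd.isPath_takeUntil hz
  have hdrop : (d.dropUntil z hz).IsPath :=
    (hspec ▸ hd).isPath_of_append_right (not_nil_of_ne huz)
  have hlen : (d.takeUntil z hz).length + (d.dropUntil z hz).length = c.length := by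
    rw [← length_append, hspec, length_rotate]
  rw [← hspec, edges_append, List.mem_append] at he'
  rcases he' with he' | he'
  · refine ⟨(d.dropUntil z hz).reverse, hdrop.reverse, ?_, fun w hw => ?_⟩
    · rw [length_reverse, ← hlen, htake.length_eq_one_of_mem_edges he']
      omega
    · rw [support_reverse, List.mem_reverse] at hw
      exact (c.mem_support_rotate_iff u hu).1 (d.support_dropUntil_subset_support hz hw)
  · refine ⟨d.takeUntil z hz, htake, ?_, fun w hw => ?_⟩
    · rw [← hlen, hdrop.length_eq_one_of_mem_edges (Sym2.eq_swap ▸ he')]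
    · exact (c.mem_support_rotate_iff u hu).1 (d.support_takeUntil_subset_support hz hw)

theorem IsPath.start_notMem_support_tail {u v : V} {p : G.Walk u v} (hp : p.IsPath) :
    u ∉ p.support.tail :=
  (List.nodup_cons.1 (p.cons_tail_support ▸ hp.support_nodup)).1

/-- The cycle is the symmetric difference of the two cycles: both with the edge `s(u, z)` removed,
glued at `u` and `z`. -/
theorem IsCycle.exists_isCycle_length_add_two [DecidableEq V] {v v' u z : V}
    {c : G.Walk v v} {c' : G.Walk v' v'} (hc : c.IsCycle) (hc' : c'.IsCycle)
    (he : s(u, z) ∈ c.edges) (he' : s(u, z) ∈ c'.edges)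
    (hmeet : ∀ w ∈ c.support, w ∈ c'.support → w = u ∨ w = z) :
    ∃ (x : V) (d : G.Walk x x), d.IsCycle ∧ d.length + 2 = c.length + c'.length := by
  obtain ⟨p, hp, hplen, hpc⟩ := hc.exists_isPath_length_add_one he
  obtain ⟨p', hp', hplen', hpc'⟩ := hc'.exists_isPath_length_add_one he'
  refine ⟨u, p.append p'.reverse, hp.isCycle_append hp'.reverse ?_ ?_, ?_⟩
  · refine List.disjoint_left.2 fun w hw hw' => ?_
    have hw₀ := List.mem_of_mem_tail hw
    have hw₀' := List.mem_of_mem_tail hw'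
    rw [support_reverse, List.mem_reverse] at hw₀'
    rcases hmeet w (hpc w hw₀) (hpc' w hw₀') with rfl | rfl
    · exact hp.start_notMem_support_tail hw
    · exact hp'.reverse.start_notMem_support_tail hw'
  · have := hc.three_le_length
    omega
  · rw [length_append, length_reverse]
    omega

end SimpleGraph.Walk

section walkSupport

variable {n : ℕ} {G : SimpleGraph (Perm (Fin n))}

@[simp]
theorem walkSupport_cons {x x' y : Perm (Fin n)} (h : G.Adj x x') (p : G.Walk x' y) :
    walkSupport (Walk.cons h p) = edgeSupport s(x, x') ∪ walkSupport p := rfl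

theorem edgeSupport_subset_walkSupport {x y : Perm (Fin n)} {p : G.Walk x y}
    {e : Sym2 (Perm (Fin n))} (he : e ∈ p.edges) : edgeSupport e ⊆ walkSupport p := by
  induction p with
  | nil => simp at he
  | cons h q ih =>
    rw [Walk.edges_cons, List.mem_cons] at he
    rw [walkSupport_cons]
    rcases he with rfl | he
    · exact Finset.subset_union_left
    · exact (ih he).trans Finset.subset_union_right

theorem support_mul_inv_start_subset_walkSupport {x y w : Perm (Fin n)} (p : G.Walk x y)
    (hw : w ∈ p.support) : (w * x⁻¹).support ⊆ walkSupport p := by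
  induction p with
  | nil =>
    rw [Walk.support_nil, List.mem_singleton] at hw
    simp [hw]
  | @cons x x' y h q ih =>
    rw [Walk.support_cons, List.mem_cons] at hw
    rcases hw with rfl | hw
    · simp
    · calc (w * x⁻¹).support = ((w * x'⁻¹) * (x' * x⁻¹)).support := by group
        _ ⊆ (w * x'⁻¹).support ∪ (x' * x⁻¹).support := Perm.support_mul_le _ _
        _ ⊆ walkSupport (Walk.cons h q) := by
          rw [walkSupport_cons, Finset.union_comm]
          exact Finset.union_subset_union_right (ih hw)

theorem support_mul_inv_subset_walkSupport {x y w u : Perm (Fin n)} (p : G.Walk x y)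
    (hw : w ∈ p.support) (hu : u ∈ p.support) : (w * u⁻¹).support ⊆ walkSupport p :=
  calc (w * u⁻¹).support = ((w * x⁻¹) * (u * x⁻¹)⁻¹).support := by group
    _ ⊆ (w * x⁻¹).support ∪ (u * x⁻¹).support := by
      rw [← Perm.support_inv (u * x⁻¹)]
      exact Perm.support_mul_le _ _
    _ ⊆ walkSupport p := Finset.union_subset
      (support_mul_inv_start_subset_walkSupport p hw) (support_mul_inv_start_subset_walkSupport p hu)

/-- The two supports meet exactly in the support of the transposition `z * u⁻¹`, which contains
that of `w * u⁻¹`; so `w * u⁻¹` is `1` or `z * u⁻¹`. -/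
theorem eq_or_eq_of_mem_support_of_card_inter_walkSupport_le_two (hG : G ≤ CT n)
    {x y x' y' u z w : Perm (Fin n)} {p : G.Walk x y} {p' : G.Walk x' y'}
    (he : s(u, z) ∈ p.edges) (he' : s(u, z) ∈ p'.edges)
    (hcard : (walkSupport p ∩ walkSupport p').card ≤ 2)
    (hw : w ∈ p.support) (hw' : w ∈ p'.support) : w = u ∨ w = z := by
  have hswap : (z * u⁻¹).IsSwap := hG (p.adj_of_mem_edges he)
  have hsub : (z * u⁻¹).support ⊆ walkSupport p ∩ walkSupport p' :=
    Finset.subset_inter (edgeSupport_subset_walkSupport he) (edgeSupport_subset_walkSupport he')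
  have hinter : walkSupport p ∩ walkSupport p' = (z * u⁻¹).support :=
    (Finset.eq_of_subset_of_card_le hsub
      (hcard.trans (Perm.card_support_eq_two.2 hswap).ge)).symm
  have hu := p.fst_mem_support_of_mem_edges he
  have hu' := p'.fst_mem_support_of_mem_edges he'
  have hwu : (w * u⁻¹).support ⊆ (z * u⁻¹).support := hinter ▸
    Finset.subset_inter (support_mul_inv_subset_walkSupport p hw hu)
      (support_mul_inv_subset_walkSupport p' hw' hu')
  rcases Perm.eq_one_or_eq_of_support_subset_of_isSwap hswap hwu with h | h
  · exact Or.inl (mul_inv_eq_one.1 h)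
  · exact Or.inr (mul_right_cancel h)

end walkSupport

theorem stmt_14_general {n a b : ℕ}
    (G : SimpleGraph (Equiv.Perm (Fin n))) (hG : G ≤ CT n)
    (hfree : ∀ (v : Equiv.Perm (Fin n)) (c : G.Walk v v), c.IsCycle → c.length ≠ 4 * a + 4 * b - 2)
    (v v' : Equiv.Perm (Fin n)) (c : G.Walk v v) (c' : G.Walk v' v')
    (hc : c.IsCycle) (hc' : c'.IsCycle)
    (hlen : c.length = 4 * a) (hlen' : c'.length = 4 * b)
    (hcommon : ∃ e, e ∈ c.edges ∧ e ∈ c'.edges) :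
    3 ≤ (walkSupport c ∩ walkSupport c').card := by
  obtain ⟨e, hec, hec'⟩ := hcommon
  induction e using Sym2.ind with
  | _ u z =>
    by_contra! hcard
    obtain ⟨x, d, hd, hdlen⟩ := hc.exists_isCycle_length_add_two hc' hec hec' fun w hw hw' =>
      eq_or_eq_of_mem_support_of_card_inter_walkSupport_le_two hG hec hec'
        (Nat.le_of_lt_succ hcard) hw hw'
    exact hfree x d hd (by omega)

theorem stmt_14 {n a b : ℕ} (ha : 2 ≤ a) (hb : 2 ≤ b)
    (G : SimpleGraph (Equiv.Perm (Fin n))) (hG : G ≤ CT n)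
    (hfree : ∀ (v : Equiv.Perm (Fin n)) (c : G.Walk v v), c.IsCycle → c.length ≠ 4 * a + 4 * b - 2)
    (v v' : Equiv.Perm (Fin n)) (c : G.Walk v v) (c' : G.Walk v' v')
    (hc : c.IsCycle) (hc' : c'.IsCycle)
    (hlen : c.length = 4 * a) (hlen' : c'.length = 4 * b)
    (hcommon : ∃ e, e ∈ c.edges ∧ e ∈ c'.edges) :
    3 ≤ (walkSupport c ∩ walkSupport c').card :=
  stmt_14_general G hG hfree v v' c c' hc hc' hlen hlen' hcommon
end

section
/- In the complete transposition graph CT_n (n ≥ 3), for any fixed edge e there are at most two 4-cycles H containing e such that the three edges of H other than e all belong to a given fixed C_6-free and triangle-free subgraph G of CT_n. -/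
open Equiv Finset

namespace Equiv.Perm

variable {α : Type*} [DecidableEq α] {f g h t t' : Perm α} {x : α}

theorem IsSwap.mul_self_s17 (ht : t.IsSwap) : t * t = 1 := by
  obtain ⟨a, b, -, rfl⟩ := ht
  exact swap_mul_self a b

theorem IsSwap.mul_mul_cancel_left (ht : t.IsSwap) : t * (t * g) = g := by
  rw [← mul_assoc, ht.mul_self_s17, one_mul]

variable [Fintype α]

theorem IsSwap.eq_swap_apply_s17 (ht : t.IsSwap) (hx : x ∈ t.support) : t = swap x (t x) :=
  ht.isCycle.eq_swap_of_apply_apply_eq_self (mem_support.1 hx) <| by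
    obtain ⟨a, b, -, rfl⟩ := ht
    exact swap_apply_self a b x

theorem IsSwap.eq_of_support_eq (ht : t.IsSwap) (ht' : t'.IsSwap)
    (h : t.support = t'.support) : t = t' := by
  obtain ⟨x, hx⟩ : t.support.Nonempty := by
    rw [← card_pos, card_support_eq_two.2 ht]; norm_num
  have hx' : x ∈ t'.support := h ▸ hx
  have htx : t' x ∈ ({x, t x} : Finset α) := by
    rw [← support_swap (mem_support.1 hx).symm, ← ht.eq_swap_apply_s17 hx, h]
    exact apply_mem_support.2 hx'
  rcases mem_insert.1 htx with hxx | hxx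
  · exact absurd hxx (mem_support.1 hx')
  · rw [ht.eq_swap_apply_s17 hx, ht'.eq_swap_apply_s17 hx', mem_singleton.1 hxx]

theorem Disjoint.mul_apply_of_mem_support_left (hd : Disjoint f h) (hx : x ∈ f.support) :
    (f * h) x = f x := by
  rw [mul_apply, notMem_support.1 (hd.mem_imp hx)]

theorem Disjoint.mul_apply_of_mem_support_right (hd : Disjoint f h) (hx : x ∈ h.support) :
    (f * h) x = h x := by
  rw [hd.commute.eq, hd.symm.mul_apply_of_mem_support_left hx]

theorem support_subset_support_union_support_mul (t g : Perm α) :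
    g.support ⊆ t.support ∪ (t * g).support :=
  calc g.support = (t⁻¹ * (t * g)).support := by rw [inv_mul_cancel_left]
    _ ⊆ t⁻¹.support ∪ (t * g).support := support_mul_le _ _
    _ = t.support ∪ (t * g).support := by rw [support_inv]

theorem IsSwap.card_support_le_four (ht : t.IsSwap) (htg : (t * g).IsSwap) :
    #g.support ≤ 4 :=
  calc #g.support ≤ #(t.support ∪ (t * g).support) :=
        card_le_card (support_subset_support_union_support_mul t g)
    _ ≤ #t.support + #(t * g).support := card_union_le _ _
    _ = 4 := by rw [card_support_eq_two.2 ht, card_support_eq_two.2 htg]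

theorem IsSwap.support_subset_of_isSwap_mul (hg : g ≠ 1) (ht : t.IsSwap)
    (htg : (t * g).IsSwap) : t.support ⊆ g.support := by
  intro x hx
  by_contra hgx
  rw [notMem_support] at hgx
  have hx' : x ∈ (t * g).support := by
    rwa [mem_support, mul_apply, hgx, ← mem_support]
  have : t * g = t := by
    rw [htg.eq_swap_apply_s17 hx', mul_apply, hgx, ← ht.eq_swap_apply_s17 hx]
  exact hg (mul_eq_left.1 this)

theorem IsSwap.disjoint_mul_of_card_support_eq_four (hg4 : #g.support = 4) (ht : t.IsSwap)
    (htg : (t * g).IsSwap) : Disjoint t (t * g) := by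
  rw [disjoint_iff_disjoint_support, ← card_union_eq_card_add_card]
  have hle := card_le_card (support_subset_support_union_support_mul t g)
  have hge := card_union_le t.support (t * g).support
  rw [card_support_eq_two.2 ht, card_support_eq_two.2 htg] at hge ⊢
  omega

-- `g` is then the product of the disjoint transpositions `t` and `t * g`; `t'` is one of them.
theorem IsSwap.eq_or_eq_mul_of_card_support_eq_four (hg4 : #g.support = 4)
    (ht : t.IsSwap) (htg : (t * g).IsSwap) (ht' : t'.IsSwap) (ht'g : (t' * g).IsSwap) :
    t' = t ∨ t' = t * g := by
  have hg : g ≠ 1 := by rintro rfl; simp at hg4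
  obtain ⟨x, hx⟩ : t'.support.Nonempty := by
    rw [← card_pos, card_support_eq_two.2 ht']; norm_num
  have ht'x : t' x = g x := by
    rw [← ht'.mul_mul_cancel_left (g := g),
      (ht'.disjoint_mul_of_card_support_eq_four hg4 ht'g).mul_apply_of_mem_support_left hx]
  have hd := ht.disjoint_mul_of_card_support_eq_four hg4 htg
  have hgt : ∀ y, g y = (t * (t * g)) y := fun y => by rw [ht.mul_mul_cancel_left]
  rcases mem_union.1 (support_subset_support_union_support_mul t g
    (ht'.support_subset_of_isSwap_mul hg ht'g hx)) with hxt | hxs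
  · left
    rw [ht'.eq_swap_apply_s17 hx, ht'x, hgt, hd.mul_apply_of_mem_support_left hxt,
      ← ht.eq_swap_apply_s17 hxt]
  · right
    rw [ht'.eq_swap_apply_s17 hx, ht'x, hgt, hd.mul_apply_of_mem_support_right hxs,
      ← htg.eq_swap_apply_s17 hxs]

theorem ncard_setOf_isSwap_isSwap_mul_le_three (hg : g ≠ 1) :
    {t : Perm α | t.IsSwap ∧ (t * g).IsSwap}.ncard ≤ 3 := by
  rcases Set.eq_empty_or_nonempty {t : Perm α | t.IsSwap ∧ (t * g).IsSwap} with hT | ⟨t, ht, htg⟩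
  · simp [hT]
  rcases (ht.card_support_le_four htg).lt_or_eq with hlt | hg4
  · calc _ ≤ (↑(g.support.powersetCard 2) : Set (Finset α)).ncard :=
          Set.ncard_le_ncard_of_injOn support
            (fun s hs => mem_powersetCard.2
              ⟨hs.1.support_subset_of_isSwap_mul hg hs.2, card_support_eq_two.2 hs.1⟩)
            (fun s hs s' hs' => hs.1.eq_of_support_eq hs'.1)
      _ = (#g.support).choose 2 := by rw [Set.ncard_coe_finset, card_powersetCard]
      _ ≤ Nat.choose 3 2 := Nat.choose_le_choose 2 (by omega)
      _ = 3 := rfl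
  · calc _ ≤ ({t, t * g} : Set (Perm α)).ncard :=
          Set.ncard_le_ncard fun s hs => ht.eq_or_eq_mul_of_card_support_eq_four hg4 htg hs.1 hs.2
      _ ≤ 3 := (Set.ncard_insert_le _ _).trans (by simp)

end Equiv.Perm

theorem Prod.all_fst_eq_or_all_snd_eq {α β : Type*} {p q r : α × β} (hpq : p ≠ q) (hpr : p ≠ r)
    (h₁ : p.1 = q.1 ∨ p.2 = q.2) (h₂ : p.1 = r.1 ∨ p.2 = r.2)
    (h₃ : q.1 = r.1 ∨ q.2 = r.2) : p.1 = q.1 ∧ p.1 = r.1 ∨ p.2 = q.2 ∧ p.2 = r.2 := by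
  rcases h₁ with h₁ | h₁ <;> rcases h₂ with h₂ | h₂
  · exact .inl ⟨h₁, h₂⟩
  · rcases h₃ with h₃ | h₃
    · exact absurd (Prod.ext (h₁.trans h₃) h₂) hpr
    · exact absurd (Prod.ext h₁ (h₂.trans h₃.symm)) hpq
  · rcases h₃ with h₃ | h₃
    · exact absurd (Prod.ext (h₂.trans h₃.symm) h₁) hpq
    · exact absurd (Prod.ext h₂ (h₁.trans h₃)) hpr
  · exact .inr ⟨h₁, h₂⟩

namespace SimpleGraph

variable {V : Type*} {G : SimpleGraph V}

theorem exists_isCycle_length_eq_six {a b c d e f : V}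
    (hab : G.Adj a b) (hbc : G.Adj b c) (hcd : G.Adj c d) (hde : G.Adj d e) (hef : G.Adj e f)
    (hfa : G.Adj f a) (hac : a ≠ c) (had : a ≠ d) (hae : a ≠ e) (hbd : b ≠ d) (hbe : b ≠ e)
    (hbf : b ≠ f) (hce : c ≠ e) (hcf : c ≠ f) (hdf : d ≠ f) :
    ∃ w : G.Walk a a, w.IsCycle ∧ w.length = 6 := by
  refine ⟨.cons hab (.cons hbc (.cons hcd (.cons hde (.cons hef (.cons hfa .nil))))), ?_, rfl⟩
  have := hab.ne; have := hbc.ne; have := hcd.ne; have := hde.ne; have := hef.ne; have := hfa.ne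
  simp only [Walk.cons_isCycle_iff, Walk.cons_isPath_iff, Walk.IsPath.nil, Walk.support_cons,
    Walk.support_nil, Walk.edges_cons, Walk.edges_nil, List.mem_cons, List.not_mem_nil, Sym2.eq,
    Sym2.rel_iff', Prod.mk.injEq, Prod.swap_prod_mk]
  grind

def threePathInteriors (G : SimpleGraph V) (z u : V) : Set (V × V) :=
  {p | G.Adj z p.1 ∧ G.Adj p.1 p.2 ∧ G.Adj p.2 u ∧ p.1 ≠ u ∧ p.2 ≠ z}

variable {z u : V} {p q r : V × V}

theorem swap_mem_threePathInteriors (hp : p ∈ G.threePathInteriors z u) :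
    p.swap ∈ G.threePathInteriors u z :=
  let ⟨hzp, hp12, hpu, hp1u, hp2z⟩ := hp
  ⟨hpu.symm, hp12.symm, hzp.symm, hp2z, hp1u⟩

theorem fst_eq_or_snd_eq_of_mem_threePathInteriors
    (h6 : ∀ (v : V) (c : G.Walk v v), c.IsCycle → c.length ≠ 6) (h3 : G.CliqueFree 3)
    (hzu : z ≠ u) (hp : p ∈ G.threePathInteriors z u) (hq : q ∈ G.threePathInteriors z u) :
    p.1 = q.1 ∨ p.2 = q.2 := by
  classical
  obtain ⟨hzp, hp12, hpu, hp1u, hp2z⟩ := hp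
  obtain ⟨hzq, hq12, hqu, hq1u, hq2z⟩ := hq
  by_contra! h
  have triangle {a b c : V} (hab : G.Adj a b) (hac : G.Adj a c) (hbc : G.Adj b c) : False :=
    h3 _ (is3Clique_triple_iff.2 ⟨hab, hac, hbc⟩)
  have hp1q2 : p.1 ≠ q.2 := fun heq => triangle hp12 (heq ▸ hqu) hpu
  have hp2q1 : p.2 ≠ q.1 := fun heq => triangle hzp (heq ▸ hzq) hp12
  obtain ⟨w, hw, hlen⟩ := exists_isCycle_length_eq_six hzp hp12 hpu hqu.symm hq12.symm hzq.symm
    hp2z.symm hzu hq2z.symm hp1u hp1q2 h.1 h.2 hp2q1 hq1u.symm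
  exact h6 z w hw hlen

end SimpleGraph

open SimpleGraph Equiv.Perm

theorem ncard_commonNeighbors_CT_le_three {n : ℕ} {x y : Equiv.Perm (Fin n)} (hxy : x ≠ y) :
    ((CT n).commonNeighbors x y).ncard ≤ 3 :=
  calc _ ≤ {t : Equiv.Perm (Fin n) | t.IsSwap ∧ (t * (x * y⁻¹)).IsSwap}.ncard :=
        Set.ncard_le_ncard_of_injOn (· * x⁻¹)
          (fun w hw => ⟨hw.1, by rw [mul_assoc, inv_mul_cancel_left]; exact hw.2⟩)
          (mul_left_injective _).injOn
    _ ≤ 3 := ncard_setOf_isSwap_isSwap_mul_le_three (mul_inv_eq_one.not.2 hxy)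

theorem eq_or_eq_or_eq_of_mem_threePathInteriors_of_fst_eq {n : ℕ}
    {G : SimpleGraph (Equiv.Perm (Fin n))} (hG : G ≤ CT n) {u z : Equiv.Perm (Fin n)}
    (huz : (CT n).Adj u z) {p q r : Equiv.Perm (Fin n) × Equiv.Perm (Fin n)}
    (hp : p ∈ G.threePathInteriors z u) (hq : q ∈ G.threePathInteriors z u)
    (hr : r ∈ G.threePathInteriors z u) (hpq : p.1 = q.1) (hpr : p.1 = r.1) :
    p = q ∨ p = r ∨ q = r := by
  obtain ⟨hzp, hp12, hpu, hp1u, hp2z⟩ := hp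
  obtain ⟨-, hq12, hqu, -, hq2z⟩ := hq
  obtain ⟨-, hr12, hru, -, hr2z⟩ := hr
  by_contra! h
  have hsub : {z, p.2, q.2, r.2} ⊆ (CT n).commonNeighbors p.1 u := by
    simp only [Set.insert_subset_iff, Set.singleton_subset_iff, mem_commonNeighbors]
    exact ⟨⟨hG hzp.symm, huz⟩, ⟨hG hp12, hG hpu.symm⟩, ⟨hG (hpq ▸ hq12), hG hqu.symm⟩,
      ⟨hG (hpr ▸ hr12), hG hru.symm⟩⟩
  have := (Set.ncard_le_ncard hsub).trans (ncard_commonNeighbors_CT_le_three hp1u)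
  rw [Set.ncard_insert_of_notMem, Set.ncard_insert_of_notMem, Set.ncard_pair] at this
  all_goals grind [Prod.ext_iff]

theorem stmt_17_general {n : ℕ} (G : SimpleGraph (Equiv.Perm (Fin n))) (hG : G ≤ CT n)
    (h6 : ∀ (v : Equiv.Perm (Fin n)) (c : G.Walk v v), c.IsCycle → c.length ≠ 6)
    (h3 : G.CliqueFree 3)
    (u z : Equiv.Perm (Fin n)) (huz : (CT n).Adj u z) :
    Nat.card {p : Equiv.Perm (Fin n) × Equiv.Perm (Fin n) |
      G.Adj z p.1 ∧ G.Adj p.1 p.2 ∧ G.Adj p.2 u ∧ p.1 ≠ u ∧ p.2 ≠ z} ≤ 2 := by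
  change Nat.card (G.threePathInteriors z u) ≤ 2
  by_contra! h
  rw [Nat.card_coe_set_eq] at h
  obtain ⟨p, q, r, hp, hq, hr, hpq, hpr, hqr⟩ := (Set.two_lt_ncard_iff (Set.toFinite _)).1 h
  have share {s t} (hs : s ∈ G.threePathInteriors z u) (ht : t ∈ G.threePathInteriors z u) :=
    fst_eq_or_snd_eq_of_mem_threePathInteriors h6 h3 huz.ne' hs ht
  rcases Prod.all_fst_eq_or_all_snd_eq hpq hpr (share hp hq) (share hp hr) (share hq hr) with
    ⟨h1, h2⟩ | ⟨h1, h2⟩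
  · have := eq_or_eq_or_eq_of_mem_threePathInteriors_of_fst_eq hG huz hp hq hr h1 h2
    tauto
  · have := eq_or_eq_or_eq_of_mem_threePathInteriors_of_fst_eq hG huz.symm
      (swap_mem_threePathInteriors hp) (swap_mem_threePathInteriors hq)
      (swap_mem_threePathInteriors hr) h1 h2
    simp only [Prod.swap_inj] at this
    tauto

/-- For a fixed edge `{u,z}` of `CT n` and a `C₆`-free, triangle-free subgraph `G`,
at most two 4-cycles `u - z - p.1 - p.2 - u` of `CT n` through the edge have their
other three edges in `G`. -/
theorem stmt_17 {n : ℕ} (hn : 3 ≤ n) (G : SimpleGraph (Equiv.Perm (Fin n))) (hG : G ≤ CT n)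
    (h6 : ∀ (v : Equiv.Perm (Fin n)) (c : G.Walk v v), c.IsCycle → c.length ≠ 6)
    (h3 : G.CliqueFree 3)
    (u z : Equiv.Perm (Fin n)) (huz : (CT n).Adj u z) :
    Nat.card {p : Equiv.Perm (Fin n) × Equiv.Perm (Fin n) |
      G.Adj z p.1 ∧ G.Adj p.1 p.2 ∧ G.Adj p.2 u ∧ p.1 ≠ u ∧ p.2 ≠ z} ≤ 2 :=
  stmt_17_general G hG h6 h3 u z huz
end
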